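/- Let x ∈ C^α([a,b],ℝ^m), let g ∈ C^2 with ‖Dg‖_∞ ≤ C_g and ‖D²g‖_∞ ≤ C_g, and let (y, y′) be controlled by x with y′ = g(y), i.e. y_{s,t} = g(y_s) x_{s,t} + R^y_{s,t}. Then g(y) is controlled by x with Gubinelli derivative [g(y)]′_s = Dg(y_s) g(y_s) and remainder R^{g(y)}_{s,t} = g(y_t) - g(y_s) - Dg(y_s) g(y_s) x_{s,t} satisfying ‖R^{g(y)}_{s,t}‖ ≤ C_g ‖R^y_{s,t}‖ + (1/2) C_g² ‖y_{s,t}‖ ‖x_{s,t}‖. -/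

import Mathlib

/-!
Put `a = y_s`, `Δ = y_{s,t}` and `u = g(y_s) x_{s,t}`, so that `Δ - u = R^y_{s,t}`. The path
`τ ↦ g(a + τΔ) - τ Dg(a) u` has derivative `Dg(a + τΔ)(Δ - u) + (Dg(a + τΔ) - Dg(a)) u`, of norm
at most `C_g ‖R^y_{s,t}‖ + C_g τ ‖Δ‖ ‖u‖` since `Dg` is `C_g`-Lipschitz, and `‖u‖ ≤ C_g ‖x_{s,t}‖`.
Comparing with the antiderivative of this bound on `[0, 1]` gives the estimate; the factor `1/2`
is `∫₀¹ τ dτ`.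
-/

open Set

section

variable {E F : Type*} [NormedAddCommGroup E] [NormedSpace ℝ E]
  [NormedAddCommGroup F] [NormedSpace ℝ F]

theorem norm_fderiv_sub_fderiv_le_of_norm_iteratedFDeriv_two_le {f : E → F} {C : ℝ}
    (hf : ContDiff ℝ 2 f) (hC : ∀ z, ‖iteratedFDeriv ℝ 2 f z‖ ≤ C) (z₁ z₂ : E) :
    ‖fderiv ℝ f z₁ - fderiv ℝ f z₂‖ ≤ C * ‖z₁ - z₂‖ := by
  have hdiff : Differentiable ℝ (fderiv ℝ f) :=
    (hf.fderiv_right (m := 1) le_rfl).differentiable one_ne_zero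
  refine convex_univ.norm_image_sub_le_of_norm_fderiv_le (fun z _ => hdiff z) (fun z _ => ?_)
    (mem_univ z₂) (mem_univ z₁)
  rw [← norm_iteratedFDeriv_one, norm_iteratedFDeriv_fderiv]
  exact hC z

theorem norm_sub_sub_fderiv_apply_le {f : E → F} {L M : ℝ} (hf : Differentiable ℝ f)
    (hL : ∀ z₁ z₂, ‖fderiv ℝ f z₁ - fderiv ℝ f z₂‖ ≤ L * ‖z₁ - z₂‖)
    (hM : ∀ z, ‖fderiv ℝ f z‖ ≤ M) (a Δ u : E) :
    ‖f (a + Δ) - f a - fderiv ℝ f a u‖ ≤ M * ‖Δ - u‖ + L / 2 * ‖Δ‖ * ‖u‖ := by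
  set φ : ℝ → F := fun τ => f (a + τ • Δ) - f a - τ • fderiv ℝ f a u
  have hφ : ∀ τ, HasDerivAt φ (fderiv ℝ f (a + τ • Δ) Δ - fderiv ℝ f a u) τ := by
    intro τ
    have hpath : HasDerivAt (fun τ : ℝ => a + τ • Δ) Δ τ := by
      simpa using ((hasDerivAt_id τ).smul_const Δ).const_add a
    exact (((hf _).hasFDerivAt.comp_hasDerivAt τ hpath).sub_const (f a)).sub
      (by simpa using (hasDerivAt_id τ).smul_const (fderiv ℝ f a u))
  have hboundary : ∀ τ, HasDerivAt (fun τ : ℝ => M * ‖Δ - u‖ * τ + L / 2 * ‖Δ‖ * ‖u‖ * τ ^ 2)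
      (M * ‖Δ - u‖ + L * ‖Δ‖ * ‖u‖ * τ) τ := fun τ =>
    (((hasDerivAt_id' τ).const_mul (M * ‖Δ - u‖)).add
      ((hasDerivAt_pow 2 τ).const_mul (L / 2 * ‖Δ‖ * ‖u‖))).congr_deriv (by norm_num; ring)
  have hbound : ∀ τ ∈ Ico (0 : ℝ) 1, ‖fderiv ℝ f (a + τ • Δ) Δ - fderiv ℝ f a u‖ ≤
      M * ‖Δ - u‖ + L * ‖Δ‖ * ‖u‖ * τ := by
    intro τ hτ
    have hsplit : fderiv ℝ f (a + τ • Δ) Δ - fderiv ℝ f a u =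
        fderiv ℝ f (a + τ • Δ) (Δ - u) + (fderiv ℝ f (a + τ • Δ) - fderiv ℝ f a) u := by
      simp only [map_sub, sub_apply]; abel
    calc _ ≤ ‖fderiv ℝ f (a + τ • Δ)‖ * ‖Δ - u‖ +
          ‖fderiv ℝ f (a + τ • Δ) - fderiv ℝ f a‖ * ‖u‖ := by
          rw [hsplit]
          exact (norm_add_le _ _).trans
            (add_le_add (ContinuousLinearMap.le_opNorm _ _) (ContinuousLinearMap.le_opNorm _ _))
      _ ≤ M * ‖Δ - u‖ + L * ‖τ • Δ‖ * ‖u‖ := by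
          gcongr
          · exact hM _
          · simpa using hL (a + τ • Δ) a
      _ = M * ‖Δ - u‖ + L * ‖Δ‖ * ‖u‖ * τ := by
          rw [norm_smul, Real.norm_of_nonneg hτ.1]; ring
  simpa [φ] using image_norm_le_of_norm_deriv_right_le_deriv_boundary
    (fun τ _ => (hφ τ).continuousAt.continuousWithinAt) (fun τ _ => (hφ τ).hasDerivWithinAt)
    (by simp [φ]) hboundary hbound (right_mem_Icc.2 zero_le_one)

end

/-- If `(y, y′)` is controlled by `x` with `y′ = g(y)`, i.e.
`y_{s,t} = g(y_s) x_{s,t} + R^y_{s,t}`, and `g ∈ C²` with `‖g‖_∞, ‖Dg‖_∞, ‖D²g‖_∞ ≤ C_g`,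
then `g(y)` is controlled by `x` with Gubinelli derivative `[g(y)]′_s = Dg(y_s) g(y_s)` and
remainder satisfying `‖R^{g(y)}_{s,t}‖ ≤ C_g ‖R^y_{s,t}‖ + (1/2) C_g² ‖y_{s,t}‖ ‖x_{s,t}‖`. -/
theorem controlled_composition {m d : ℕ}
    (g : EuclideanSpace ℝ (Fin d) →
      (EuclideanSpace ℝ (Fin m) →L[ℝ] EuclideanSpace ℝ (Fin d)))
    (Cg : ℝ) (hg : ContDiff ℝ 2 g)
    (hgb : ∀ z, ‖g z‖ ≤ Cg)
    (hDg : ∀ z, ‖fderiv ℝ g z‖ ≤ Cg)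
    (hD2g : ∀ z, ‖iteratedFDeriv ℝ 2 g z‖ ≤ Cg)
    (x : ℝ → EuclideanSpace ℝ (Fin m)) (y : ℝ → EuclideanSpace ℝ (Fin d))
    (R : ℝ → ℝ → EuclideanSpace ℝ (Fin d))
    (hctrl : ∀ s t, y t - y s = g (y s) (x t - x s) + R s t) :
    ∀ s t : ℝ,
      ‖g (y t) - g (y s) - ((fderiv ℝ g (y s)).comp (g (y s))) (x t - x s)‖ ≤
        Cg * ‖R s t‖ + (1 / 2) * Cg ^ 2 * ‖y t - y s‖ * ‖x t - x s‖ := by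
  intro s t
  have hCg : 0 ≤ Cg := (norm_nonneg _).trans (hgb (y s))
  have hu : ‖g (y s) (x t - x s)‖ ≤ Cg * ‖x t - x s‖ := (g (y s)).le_of_opNorm_le (hgb _) _
  have hR : y t - y s - g (y s) (x t - x s) = R s t := by rw [hctrl]; abel
  have hremainder := norm_sub_sub_fderiv_apply_le (hg.differentiable two_ne_zero)
    (norm_fderiv_sub_fderiv_le_of_norm_iteratedFDeriv_two_le hg hD2g) hDg
    (y s) (y t - y s) (g (y s) (x t - x s))
  rw [add_sub_cancel, hR] at hremainder
  calc _ ≤ Cg * ‖R s t‖ + Cg / 2 * ‖y t - y s‖ * ‖g (y s) (x t - x s)‖ := hremainder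
    _ ≤ Cg * ‖R s t‖ + Cg / 2 * ‖y t - y s‖ * (Cg * ‖x t - x s‖) := by gcongr
    _ = Cg * ‖R s t‖ + (1 / 2) * Cg ^ 2 * ‖y t - y s‖ * ‖x t - x s‖ := by ring
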